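/- Let n ≥ 5 and 2 ≤ k < n/2 be integers and λ > 0. Define Ξ(t) = -ln(e^t/(1+e^{2t})) - ln(2^{1/2}·C(n,k)^{1/(2k)}) and E(t) = Ξ(t + ln λ). Then E satisfies F_k[E](t) = 1 and |E'(t)| < 1 for all t ∈ ℝ, where F_k[E](t) = 2^{1-k}·C(n-1,k-1)·e^{2kE(t)}(1-E'(t)²)^{k-1}(E''(t) + ((n-2k)/(2k))(1-E'(t)²)). -/

import Mathlib

/-!
Since `exp t / (1 + exp (2t)) = 1 / (2 cosh t)`, the profile is
`E t = log (2 cosh (t + log λ)) - c`. Hence `E' = tanh`, `E'' = 1 / cosh² = 1 - E'²`, and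
`exp (2kE) (1 - E'²)^k = 4^k exp (-2kc)`, which the normalising constant `c` turns into
`2^k / C(n,k)`. The identity `n C(n-1,k-1) = k C(n,k)` then gives `F_k[E] = 1`, and
`|E'| = |tanh| < 1`.
-/

open Real

namespace Real

theorem neg_log_exp_div_one_add_exp_two_mul (x : ℝ) :
    -log (exp x / (1 + exp (2 * x))) = log (2 * cosh x) := by
  have h : exp x / (1 + exp (2 * x)) = (2 * cosh x)⁻¹ := by
    rw [cosh_eq, exp_neg, two_mul x, exp_add]
    field_simp
    ring
  rw [h, log_inv, neg_neg]

theorem one_sub_tanh_sq (x : ℝ) : 1 - tanh x ^ 2 = 1 / cosh x ^ 2 := by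
  have := (cosh_pos x).ne'
  rw [tanh_eq_sinh_div_cosh]
  field_simp
  linear_combination cosh_sq_sub_sinh_sq x

theorem hasDerivAt_tanh (x : ℝ) : HasDerivAt tanh (1 / cosh x ^ 2) x := by
  have h := (hasDerivAt_sinh x).div (hasDerivAt_cosh x) (cosh_pos x).ne'
  rw [show sinh / cosh = tanh from funext fun y => (tanh_eq_sinh_div_cosh y).symm] at h
  refine h.congr_deriv ?_
  rw [← cosh_sq_sub_sinh_sq x]
  ring

theorem hasDerivAt_log_two_mul_cosh (x : ℝ) :
    HasDerivAt (fun y => log (2 * cosh y)) (tanh x) x := by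
  have h := ((hasDerivAt_cosh x).const_mul 2).log (by positivity)
  convert h using 1
  rw [tanh_eq_sinh_div_cosh]
  field_simp

end Real

theorem exp_two_mul_log_two_mul_cosh_sub (k : ℕ) (x c : ℝ) :
    exp (2 * k * (log (2 * cosh x) - c)) * (1 - tanh x ^ 2) ^ k = 4 ^ k / exp (2 * k * c) := by
  have h := (cosh_pos x).ne'
  rw [one_sub_tanh_sq, mul_sub, exp_sub, mul_comm (2 : ℝ), mul_assoc, exp_nat_mul,
    ← log_rpow (by positivity), exp_log (by positivity)]
  field_simp
  norm_num
  rw [← inv_pow, ← mul_pow]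
  congr 1
  field_simp
  ring

theorem exp_two_mul_log_sqrt_two_mul_rpow {k : ℕ} (hk : k ≠ 0) {b : ℝ} (hb : 0 < b) :
    exp (2 * k * log ((2 : ℝ) ^ ((1 : ℝ) / 2) * b ^ ((1 : ℝ) / (2 * k)))) = 2 ^ k * b := by
  have hk' : (k : ℝ) ≠ 0 := Nat.cast_ne_zero.2 hk
  rw [log_mul (by positivity) (by positivity), log_rpow two_pos, log_rpow hb,
    show 2 * (k : ℝ) * (1 / 2 * log 2 + 1 / (2 * k) * log b) = k * log 2 + log b by
      field_simp,
    exp_add, exp_nat_mul, exp_log two_pos, exp_log hb]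

theorem Nat.mul_choose_sub_one {n k : ℕ} (hn : n ≠ 0) (hk : k ≠ 0) :
    n * (n - 1).choose (k - 1) = n.choose k * k := by
  obtain ⟨m, rfl⟩ := Nat.exists_eq_succ_of_ne_zero hn
  obtain ⟨j, rfl⟩ := Nat.exists_eq_succ_of_ne_zero hk
  exact Nat.add_one_mul_choose_eq m j

theorem deriv_log_two_mul_cosh_add_sub (a c : ℝ) :
    deriv (fun t => log (2 * cosh (t + a)) - c) = fun t => tanh (t + a) :=
  funext fun t => ((hasDerivAt_log_two_mul_cosh (t + a)).comp_add_const t a).sub_const c |>.deriv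

theorem deriv_tanh_add (a t : ℝ) : deriv (fun t => tanh (t + a)) t = 1 - tanh (t + a) ^ 2 := by
  rw [((hasDerivAt_tanh (t + a)).comp_add_const t a).deriv, one_sub_tanh_sq]

/-- For the bubble, `e = exp (2kE)` and `q = 1 - E'^2 = E''`. -/
theorem sigmaK_operator_eq_one_of_mul_pow_eq {n k : ℕ} (hk : k ≠ 0) (hkn : k ≤ n) {e q : ℝ}
    (h : e * q ^ k = 2 ^ k / n.choose k) :
    (2 : ℝ) ^ ((1 : ℝ) - k) * ((n - 1).choose (k - 1) : ℝ) * e * q ^ (k - 1) *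
      (q + ((n - 2 * k) / (2 * k)) * q) = 1 := by
  have hchoose : (n.choose k : ℝ) ≠ 0 := Nat.cast_ne_zero.2 (Nat.choose_pos hkn).ne'
  have hk' : (k : ℝ) ≠ 0 := Nat.cast_ne_zero.2 hk
  have hid : (n : ℝ) * (n - 1).choose (k - 1) = n.choose k * k := by
    exact_mod_cast Nat.mul_choose_sub_one (by omega) hk
  calc _ = 2 ^ ((1 : ℝ) - k) * ((n - 1).choose (k - 1) : ℝ) * (e * q ^ (k - 1 + 1)) *
          (n / (2 * k)) := by
        rw [pow_succ]
        field_simp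
        ring
    _ = 1 := by
        rw [Nat.sub_add_cancel (Nat.one_le_iff_ne_zero.2 hk), h, rpow_sub two_pos, rpow_one,
          rpow_natCast]
        field_simp
        linear_combination hid

theorem stmt_7_general (n k : ℕ) (hk : 2 ≤ k) (hkn : 2 * k < n)
    (lam : ℝ)
    (Xi E : ℝ → ℝ)
    (hXi : ∀ t, Xi t = -Real.log (Real.exp t / (1 + Real.exp (2 * t)))
        - Real.log ((2:ℝ) ^ ((1:ℝ)/2) * ((n.choose k : ℝ)) ^ ((1:ℝ) / (2 * (k:ℝ)))))
    (hE : ∀ t, E t = Xi (t + Real.log lam)) :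
    ∀ t : ℝ,
      (2:ℝ) ^ ((1:ℝ) - (k:ℝ)) * ((n - 1).choose (k - 1) : ℝ) *
        Real.exp (2 * (k:ℝ) * E t) * (1 - (deriv E t) ^ 2) ^ (k - 1) *
        (deriv (deriv E) t + (((n:ℝ) - 2 * (k:ℝ)) / (2 * (k:ℝ))) * (1 - (deriv E t) ^ 2)) = 1
      ∧ |deriv E t| < 1 := by
  set c := log ((2:ℝ) ^ ((1:ℝ)/2) * ((n.choose k : ℝ)) ^ ((1:ℝ) / (2 * (k:ℝ)))) with hc
  have hE_eq : E = fun t => log (2 * cosh (t + log lam)) - c := by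
    funext t
    rw [hE, hXi, neg_log_exp_div_one_add_exp_two_mul]
  subst hE_eq
  intro t
  rw [deriv_log_two_mul_cosh_add_sub, deriv_tanh_add]
  refine ⟨sigmaK_operator_eq_one_of_mul_pow_eq (by omega) (by omega) ?_, abs_tanh_lt_one _⟩
  rw [exp_two_mul_log_two_mul_cosh_sub, hc,
    exp_two_mul_log_sqrt_two_mul_rpow (by omega) (Nat.cast_pos.2 (Nat.choose_pos (by omega)))]
  field_simp
  rw [← pow_mul, mul_comm, pow_mul]
  norm_num

theorem stmt_7 (n k : ℕ) (hn : 5 ≤ n) (hk : 2 ≤ k) (hkn : 2 * k < n)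
    (lam : ℝ) (hlam : 0 < lam)
    (Xi E : ℝ → ℝ)
    (hXi : ∀ t, Xi t = -Real.log (Real.exp t / (1 + Real.exp (2 * t)))
        - Real.log ((2:ℝ) ^ ((1:ℝ)/2) * ((n.choose k : ℝ)) ^ ((1:ℝ) / (2 * (k:ℝ)))))
    (hE : ∀ t, E t = Xi (t + Real.log lam)) :
    ∀ t : ℝ,
      (2:ℝ) ^ ((1:ℝ) - (k:ℝ)) * ((n - 1).choose (k - 1) : ℝ) *
        Real.exp (2 * (k:ℝ) * E t) * (1 - (deriv E t) ^ 2) ^ (k - 1) *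
        (deriv (deriv E) t + (((n:ℝ) - 2 * (k:ℝ)) / (2 * (k:ℝ))) * (1 - (deriv E t) ^ 2)) = 1
      ∧ |deriv E t| < 1 :=
  stmt_7_general n k hk hkn lam Xi E hXi hE
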